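/- arXiv:2005.13880 — 3 statements merged into one kernel-verified Lean document; each statement's English description precedes it below -/
import Mathlib

section
/- Let m > 0, α ≥ 0, k > 0 be real numbers and let σ > 0. Then there exists a constant M > 0 (depending only on m, α, k, σ) such that for every s ∈ ℂ with Re s ≥ σ one has m·s + α + k·s⁻¹ ≠ 0 and |(m·s + α + k·s⁻¹)⁻¹| ≤ M·|s|⁻¹. -/
/-- Polynomial bound (with exponent `μ = −1`) of the transfer function
`F(s) = (m·s + α + k·s⁻¹)⁻¹` of the acoustic boundary condition (C). -/
theorem stmt1 (m α k : ℝ) (hm : 0 < m) (hα : 0 ≤ α) (hk : 0 < k)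
    (σ : ℝ) (hσ : 0 < σ) :
    ∃ M : ℝ, 0 < M ∧ ∀ s : ℂ, σ ≤ s.re →
      (m * s + α + k * s⁻¹ ≠ 0) ∧
      ‖(m * s + α + k * s⁻¹)⁻¹‖ ≤ M * ‖s‖⁻¹ := by
  set R : ℝ := σ + 2 * (α + k / σ) / m with hRdef
  have hRpos : 0 < R := by positivity
  have hRσ : σ ≤ R := by
    have h : 0 ≤ 2 * (α + k / σ) / m := by positivity
    rw [hRdef]
    linarith
  set c : ℝ := min (m * σ / R) (m / 2) with hcdef
  have hcpos : 0 < c := lt_min (by positivity) (by positivity)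
  refine ⟨c⁻¹, by positivity, fun s hs => ?_⟩
  have hsre : 0 < s.re := lt_of_lt_of_le hσ hs
  have hs0 : s ≠ 0 := by
    intro h
    rw [h] at hsre
    simp at hsre
  have habs : σ ≤ ‖s‖ := le_trans hs (Complex.re_le_norm s)
  have habs' : 0 < ‖s‖ := lt_of_lt_of_le hσ habs
  set f : ℂ := ↑m * s + ↑α + ↑k * s⁻¹ with hfdef
  have hinv_re : 0 ≤ (s⁻¹).re := by
    rw [Complex.inv_re]
    have : 0 < Complex.normSq s := Complex.normSq_pos.mpr hs0
    positivity
  have hre : m * σ ≤ f.re := by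
    have h1 : f.re = m * s.re + α + k * (s⁻¹).re := by
      simp [hfdef, Complex.add_re, Complex.mul_re, Complex.ofReal_re,
        Complex.ofReal_im]
    rw [h1]
    have h2 : m * σ ≤ m * s.re := by nlinarith
    nlinarith
  have hfpos : 0 < f.re := lt_of_lt_of_le (by positivity) hre
  have hf0 : f ≠ 0 := by
    intro h
    rw [h] at hfpos
    simp at hfpos
  refine ⟨hf0, ?_⟩
  -- key lower bound : c * ‖s‖ ≤ ‖f‖
  have hrefle : f.re ≤ ‖f‖ := Complex.re_le_norm f
  have hkey : c * ‖s‖ ≤ ‖f‖ := by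
    rcases le_or_gt ‖s‖ R with hsmall | hbig
    · have h1 : c * ‖s‖ ≤ (m * σ / R) * R :=
        mul_le_mul (min_le_left _ _) hsmall habs'.le (by positivity)
      have h2 : (m * σ / R) * R = m * σ := by field_simp
      calc c * ‖s‖ ≤ m * σ := by rw [h2] at h1; exact h1
        _ ≤ f.re := hre
        _ ≤ ‖f‖ := hrefle
    · -- large |s| case
      have hinv : ‖s⁻¹‖ ≤ σ⁻¹ := by
        rw [norm_inv]
        exact inv_anti₀ hσ habs
      have htail : ‖(↑α : ℂ) + ↑k * s⁻¹‖ ≤ α + k / σ := by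
        calc ‖(↑α : ℂ) + ↑k * s⁻¹‖ ≤ ‖(↑α : ℂ)‖ + ‖(↑k : ℂ) * s⁻¹‖ :=
              norm_add_le _ _
          _ = α + k * ‖s⁻¹‖ := by
              rw [norm_mul, Complex.norm_real, Complex.norm_real,
                Real.norm_of_nonneg hα, Real.norm_of_nonneg hk.le]
          _ ≤ α + k / σ := by
              have := mul_le_mul_of_nonneg_left hinv hk.le
              rw [div_eq_mul_inv]; linarith
      have hms : ‖(↑m : ℂ) * s‖ = m * ‖s‖ := by
        rw [norm_mul, Complex.norm_real, Real.norm_of_nonneg hm.le]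
      have h1 : m * ‖s‖ - (α + k / σ) ≤ ‖f‖ := by
        have := norm_sub_norm_le ((↑m : ℂ) * s)
          (-((↑α : ℂ) + ↑k * s⁻¹))
        have h2 : (↑m : ℂ) * s - -(↑α + ↑k * s⁻¹) = f := by
          rw [hfdef]; ring
        rw [h2, norm_neg, hms] at this
        linarith
      have h3 : α + k / σ ≤ (m / 2) * ‖s‖ := by
        have : R < ‖s‖ := hbig
        have hR2 : σ + 2 * (α + k / σ) / m < ‖s‖ := by
          rw [hRdef] at this; exact this
        have hx : m * (2 * (α + k / σ) / m) = 2 * (α + k / σ) :=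
          mul_div_cancel₀ _ hm.ne'
        nlinarith [mul_lt_mul_of_pos_left hR2 hm, mul_pos hm hσ]
      have h4 : (m / 2) * ‖s‖ ≤ ‖f‖ := by nlinarith
      have h5 : c * ‖s‖ ≤ (m / 2) * ‖s‖ :=
        mul_le_mul_of_nonneg_right (min_le_right _ _) habs'.le
      linarith
  have hfnorm : 0 < ‖f‖ := norm_pos_iff.mpr hf0
  rw [norm_inv]
  calc ‖f‖⁻¹ ≤ (c * ‖s‖)⁻¹ := by
        apply inv_anti₀ (by positivity) hkey
    _ = c⁻¹ * ‖s‖⁻¹ := by rw [mul_inv]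
end

section
/- Let ε > 0 and H ∈ ℝ be real numbers, let σ > 0 with σ ≥ 4ε²H², and let s ∈ ℂ with Re s ≥ σ. Then Re(ε⁻¹·s^{−1/2} − H·s⁻¹) ≥ σ^{3/2} / (2ε·|s|²), where s^{−1/2} denotes the principal branch complex power. -/
/-- Scalar coercivity estimate for the transfer function
`F(s) = ε⁻¹ s^{−1/2} − H s⁻¹` of the second-order absorbing boundary
condition (B2): for `Re s ≥ σ ≥ 4ε²H²`, `σ > 0`,
`Re F(s) ≥ σ^{3/2}/(2ε|s|²)`. -/
theorem stmt5 (ε H σ : ℝ) (hε : 0 < ε) (hσ : 0 < σ)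
    (hσ0 : 4 * ε ^ 2 * H ^ 2 ≤ σ) (s : ℂ) (hs : σ ≤ s.re) :
    σ ^ (3 / 2 : ℝ) / (2 * ε * ‖s‖ ^ 2) ≤
      ((ε : ℂ)⁻¹ * s ^ (-(1 / 2) : ℂ) - (H : ℂ) * s⁻¹).re := by
  have hre : 0 < s.re := lt_of_lt_of_le hσ hs
  have hs0 : s ≠ 0 := fun h => by simp [h] at hre
  set r := ‖s‖ with hr
  have hr0 : 0 < r := norm_pos_iff.mpr hs0
  have hrre : s.re ≤ r := Complex.re_le_norm s
  have hrσ : σ ≤ r := le_trans hs hrre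
  -- real part of the complex power
  have hc : (s ^ (-(1/2) : ℂ)).re = r ^ (-(1/2) : ℝ) * Real.cos (Complex.arg s / 2) := by
    rw [Complex.cpow_def_of_ne_zero hs0, Complex.exp_re]
    have h1 : (Complex.log s * (-(1/2))).re = -(1/2) * Real.log r := by
      simp [Complex.mul_re, Complex.log_re]
      rw [hr]; ring
    have h2 : (Complex.log s * (-(1/2))).im = -(Complex.arg s / 2) := by
      simp [Complex.mul_im, Complex.log_im]
      ring
    rw [h1, h2, Real.cos_neg, Real.rpow_def_of_pos hr0]
    ring_nf
  set A := (s ^ (-(1/2) : ℂ)).re with hA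
  have hcos0 : 0 ≤ Real.cos (Complex.arg s / 2) := by
    apply Real.cos_nonneg_of_mem_Icc
    constructor
    · linarith [Complex.neg_pi_lt_arg s]
    · linarith [Complex.arg_le_pi s]
  have hA0 : 0 ≤ A := by rw [hc]; positivity
  have hAsq : A ^ 2 = (r + s.re) / (2 * r ^ 2) := by
    rw [hc, mul_pow, ← Real.rpow_natCast (r ^ (-(1/2):ℝ)) 2, ← Real.rpow_mul hr0.le,
      Real.cos_sq, show 2 * (s.arg / 2) = s.arg by ring, Complex.cos_arg hs0, ← hr]
    rw [show (-(1/2):ℝ) * (2:ℕ) = -1 by push_cast; ring, Real.rpow_neg_one]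
    have hrne : r ≠ 0 := hr0.ne'
    field_simp
  have h1 : σ ≤ (A * r) ^ 2 := by
    have he : (A * r) ^ 2 = (r + s.re) / 2 := by
      rw [mul_pow, hAsq]; field_simp
    rw [he]; linarith
  have h2 : Real.sqrt σ ≤ A * r :=
    calc Real.sqrt σ ≤ Real.sqrt ((A * r) ^ 2) := Real.sqrt_le_sqrt h1
      _ = A * r := Real.sqrt_sq (by positivity)
  have hH : 2 * ε * |H| ≤ Real.sqrt σ := by
    have hsq : (2 * ε * |H|) ^ 2 ≤ σ := by
      have : (2 * ε * |H|) ^ 2 = 4 * ε ^ 2 * H ^ 2 := by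
        rw [mul_pow, mul_pow, sq_abs]; ring
      linarith
    calc 2 * ε * |H| = Real.sqrt ((2 * ε * |H|) ^ 2) := (Real.sqrt_sq (by positivity)).symm
      _ ≤ Real.sqrt σ := Real.sqrt_le_sqrt hsq
  have hsqrt0 : 0 ≤ Real.sqrt σ := Real.sqrt_nonneg σ
  have main : σ * Real.sqrt σ ≤ 2 * A * r ^ 2 - 2 * ε * H * s.re := by
    have h3 : Real.sqrt σ * r ≤ A * r * r := by nlinarith
    have h4 : H * s.re ≤ |H| * r := by
      calc H * s.re ≤ |H| * s.re := by nlinarith [le_abs_self H]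
        _ ≤ |H| * r := by nlinarith [abs_nonneg H]
    have h5 : 2 * ε * (|H| * r) ≤ Real.sqrt σ * r := by nlinarith
    have h6 : σ * Real.sqrt σ ≤ Real.sqrt σ * r := by nlinarith
    nlinarith
  -- assemble
  have hre_expr : ((ε : ℂ)⁻¹ * s ^ (-(1 / 2) : ℂ) - (H : ℂ) * s⁻¹).re
      = ε⁻¹ * A - H * (s.re / r ^ 2) := by
    rw [Complex.sub_re, Complex.mul_re, Complex.mul_re, ← Complex.ofReal_inv,
      Complex.ofReal_re, Complex.ofReal_im, Complex.ofReal_re, Complex.ofReal_im,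
      Complex.inv_re, Complex.normSq_eq_norm_sq]
    show ε⁻¹ * A - 0 * _ - (H * (s.re / r ^ 2) - 0 * _) = _
    ring
  have hσ32 : σ ^ (3/2 : ℝ) = σ * Real.sqrt σ := by
    rw [show (3/2:ℝ) = 1 + 1/2 by norm_num, Real.rpow_add hσ, Real.rpow_one,
      ← Real.sqrt_eq_rpow]
  rw [hre_expr, hσ32, div_le_iff₀ (by positivity)]
  have he2 : (ε⁻¹ * A - H * (s.re / r ^ 2)) * (2 * ε * r ^ 2)
      = 2 * A * r ^ 2 - 2 * ε * H * s.re := by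
    field_simp
  rw [he2]; exact main
end

section
/- Let p ∈ {1, 2} and let δ_p(ζ) = Σ_{ℓ=1}^{p} (1/ℓ)·(1 − ζ)^ℓ be the generating polynomial of the p-th order backward differentiation formula. Then for every z ∈ ℂ with Re z ≥ 0 one has |δ_p(e^{−z})| ≤ 2·|z|. -/
/-- Generating polynomial of the `p`-th order BDF method:
`δ_p(ζ) = Σ_{ℓ=1}^{p} (1/ℓ)(1 − ζ)^ℓ`. -/
noncomputable def bdfGen (p : ℕ) (ζ : ℂ) : ℂ :=
  ∑ ℓ ∈ Finset.Icc 1 p, (1 / (ℓ : ℂ)) * (1 - ζ) ^ ℓ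

lemma key (z : ℂ) (hz : 0 ≤ z.re) : ‖1 - Complex.exp (-z)‖ ≤ ‖z‖ := by
  have hderiv : ∀ t ∈ Set.uIcc (0:ℝ) 1,
      HasDerivAt (fun t : ℝ => Complex.exp (-(t:ℂ)*z)) (-z * Complex.exp (-(t:ℂ)*z)) t := by
    intro t _
    have h1 : HasDerivAt (fun t : ℝ => -(t:ℂ)*z) (-z) t := by
      simpa using ((Complex.ofRealCLM.hasDerivAt (x := t)).neg.mul_const z)
    simpa [mul_comm, Function.comp_def] using (Complex.hasDerivAt_exp (-(t:ℂ)*z)).comp t h1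
  have hint : ∫ t in (0:ℝ)..1, -z * Complex.exp (-(t:ℂ)*z)
      = Complex.exp (-z) - 1 := by
    have := intervalIntegral.integral_eq_sub_of_hasDerivAt hderiv
      (f := fun t : ℝ => Complex.exp (-(t:ℂ)*z)) ?_
    · simpa using this
    · apply Continuous.intervalIntegrable
      continuity
  have hbound : ‖∫ t in (0:ℝ)..1, -z * Complex.exp (-(t:ℂ)*z)‖ ≤ ‖z‖ * |(1:ℝ) - 0| := by
    apply intervalIntegral.norm_integral_le_of_norm_le_const
    intro t ht
    rw [Set.uIoc_of_le (by norm_num)] at ht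
    have : ‖Complex.exp (-(t:ℂ)*z)‖ ≤ 1 := by
      rw [Complex.norm_exp]
      apply Real.exp_le_one_iff.mpr
      simp only [neg_mul, Complex.neg_re, Complex.mul_re, Complex.ofReal_re, Complex.ofReal_im,
        zero_mul, sub_zero]
      nlinarith [ht.1.le, ht.2, hz]
    calc ‖-z * Complex.exp (-(t:ℂ)*z)‖ = ‖z‖ * ‖Complex.exp (-(t:ℂ)*z)‖ := by
          rw [norm_mul, norm_neg]
      _ ≤ ‖z‖ * 1 := by gcongr
      _ = ‖z‖ := mul_one _
  rw [hint] at hbound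
  simpa [norm_sub_rev] using hbound

/-- For `p ≤ 2` and `Re z ≥ 0` one has `|δ_p(e^{−z})| ≤ 2|z|`. -/
theorem stmt10 (p : ℕ) (hp : p = 1 ∨ p = 2) (z : ℂ) (hz : 0 ≤ z.re) :
    ‖bdfGen p (Complex.exp (-z))‖ ≤ 2 * ‖z‖ := by
  set w := 1 - Complex.exp (-z) with hw
  have h1 : ‖w‖ ≤ ‖z‖ := key z hz
  have h2 : ‖w‖ ≤ 2 := by
    have : ‖Complex.exp (-z)‖ ≤ 1 := by
      rw [Complex.norm_exp]
      apply Real.exp_le_one_iff.mpr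
      simpa using hz
    calc ‖w‖ ≤ ‖(1:ℂ)‖ + ‖Complex.exp (-z)‖ := norm_sub_le _ _
      _ ≤ 1 + 1 := by rw [norm_one]; exact add_le_add le_rfl this
      _ = 2 := by norm_num
  rcases hp with rfl | rfl
  · have hs : bdfGen 1 (Complex.exp (-z)) = w := by
      unfold bdfGen
      rw [Finset.Icc_self, Finset.sum_singleton, ← hw]
      push_cast
      ring
    rw [hs]
    linarith [h1, norm_nonneg z]
  · have hs : bdfGen 2 (Complex.exp (-z)) = w + 1/2 * w ^ 2 := by
      unfold bdfGen
      rw [show (Finset.Icc 1 2 : Finset ℕ) = {1, 2} from rfl,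
        Finset.sum_insert (by decide), Finset.sum_singleton, ← hw]
      push_cast
      ring
    rw [hs]
    calc ‖w + 1/2 * w ^ 2‖ ≤ ‖w‖ + ‖1/(2:ℂ) * w ^ 2‖ := norm_add_le _ _
      _ = ‖w‖ + ‖w‖ * ‖w‖ / 2 := by
          simp only [norm_mul, norm_pow, pow_two]
          rw [norm_div, norm_one]
          simp
          ring
      _ ≤ ‖z‖ + 2 * ‖z‖ / 2 := by
          have : ‖w‖ * ‖w‖ ≤ 2 * ‖z‖ := mul_le_mul h2 h1 (norm_nonneg _) (by norm_num)
          linarith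
      _ = 2 * ‖z‖ := by ring
end
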